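/- The Frattini subgroup of U_{n+1}(ℤ/p^m) equals the kernel of the homomorphism φ_m : U_{n+1}(ℤ/p^m) → (𝔽_p)^n sending a matrix to its superdiagonal entries reduced modulo p; consequently, φ_m induces an isomorphism U_{n+1}(ℤ/p^m)/Frat(U_{n+1}(ℤ/p^m)) ≅ (𝔽_p)^n. -/

import Mathlib

open Matrix

/-- A matrix is upper-triangular unipotent. -/
def IsUU {R : Type*} [CommRing R] {N : ℕ} (M : Matrix (Fin N) (Fin N) R) : Prop :=
  M.BlockTriangular id ∧ ∀ i, M i i = 1

theorem diag_mul_of_triangular {R : Type*} [CommRing R] {N : ℕ}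
    {A B : Matrix (Fin N) (Fin N) R} (hA : A.BlockTriangular id)
    (hB : B.BlockTriangular id) (i : Fin N) :
    (A * B) i i = A i i * B i i := by
  rw [Matrix.mul_apply]
  refine Finset.sum_eq_single i (fun j _ hj => ?_) (fun h => absurd (Finset.mem_univ i) h)
  rcases lt_or_gt_of_ne hj with h | h
  · rw [hA h, zero_mul]
  · rw [hB h, mul_zero]

theorem IsUU.mul {R : Type*} [CommRing R] {N : ℕ} {A B : Matrix (Fin N) (Fin N) R}
    (hA : IsUU A) (hB : IsUU B) : IsUU (A * B) :=
  ⟨hA.1.mul hB.1, fun i => by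
    rw [diag_mul_of_triangular hA.1 hB.1, hA.2, hB.2, one_mul]⟩

theorem IsUU.one {R : Type*} [CommRing R] {N : ℕ} : IsUU (1 : Matrix (Fin N) (Fin N) R) :=
  ⟨Matrix.blockTriangular_one, fun i => Matrix.one_apply_eq i⟩

theorem IsUU.inv {R : Type*} [CommRing R] {N : ℕ} {A : (Matrix (Fin N) (Fin N) R)ˣ}
    (hA : IsUU (A : Matrix (Fin N) (Fin N) R)) :
    IsUU ((A⁻¹ : (Matrix (Fin N) (Fin N) R)ˣ) : Matrix (Fin N) (Fin N) R) := by
  letI := A.invertible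
  have hinv : ((A⁻¹ : (Matrix (Fin N) (Fin N) R)ˣ) : Matrix (Fin N) (Fin N) R)
      = (A : Matrix (Fin N) (Fin N) R)⁻¹ := Matrix.coe_units_inv A
  have t : ((A : Matrix (Fin N) (Fin N) R)⁻¹).BlockTriangular id :=
    Matrix.blockTriangular_inv_of_blockTriangular hA.1
  refine ⟨hinv ▸ t, fun i => ?_⟩
  have h1 : ((A : Matrix (Fin N) (Fin N) R) *
      ((A⁻¹ : (Matrix (Fin N) (Fin N) R)ˣ) : Matrix (Fin N) (Fin N) R)) i i = 1 := by
    rw [← Units.val_mul, mul_inv_cancel]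
    exact Matrix.one_apply_eq i
  rw [diag_mul_of_triangular hA.1 (hinv ▸ t) i, hA.2, one_mul] at h1
  exact h1

/-- The group of upper-triangular unipotent `N × N` matrices over `R`,
as a subgroup of the units of the matrix ring. -/
def UT (R : Type*) [CommRing R] (N : ℕ) : Subgroup (Matrix (Fin N) (Fin N) R)ˣ where
  carrier := {u | IsUU (u : Matrix (Fin N) (Fin N) R)}
  one_mem' := IsUU.one
  mul_mem' := fun {a b} ha hb => by
    show IsUU ((a * b : (Matrix (Fin N) (Fin N) R)ˣ) : Matrix (Fin N) (Fin N) R)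
    rw [Units.val_mul]; exact ha.mul hb
  inv_mem' := fun {a} ha => ha.inv

/-- The `(i,j)` entry of an element of `UT R N`. -/
def UTentry {R : Type*} [CommRing R] {N : ℕ} (u : UT R N) (i j : Fin N) : R :=
  ((u : (Matrix (Fin N) (Fin N) R)ˣ) : Matrix (Fin N) (Fin N) R) i j

/-!
Every maximal subgroup `M` of the finite `p`-group `U = U_{n+1}(ℤ/p^m)` is normal of index
`p`, so it contains all commutators and `p`-th powers. A transvection `1 + c E_{ij}` with
`j ≥ i + 2` is the commutator of `1 + c E_{i,i+1}` and `1 + E_{i+1,j}`, and one with `j = i + 1`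
and `p ∣ c` is a `p`-th power. Clearing the entries above the diagonal one at a time, lowest row
first, writes each element of `ker φ` as a product of such transvections, so `ker φ ≤ M`.
Conversely, each coordinate of `φ` is a surjection onto `ℤ/p`, whose kernel is maximal. Finally,
`U` is a `p`-group because `(u - 1)^(n+1) = 0` by Cayley–Hamilton and `p^m` divides the binomial
coefficient `C(p^(m+n+1), j)` for `0 < j ≤ n`.
-/

open scoped commutatorElement

theorem add_one_pow_eq_one_of_pow_eq_zero {S : Type*} [Ring S] {x : S} {N M : ℕ}
    (hx : x ^ N = 0) (hM : ∀ j, 0 < j → j < N → (M.choose j : S) = 0) : (x + 1) ^ M = 1 := by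
  rw [(Commute.one_right x).add_pow, Finset.sum_eq_single 0]
  · simp
  · intro j _ hj
    rcases lt_or_ge j N with hjN | hjN
    · rw [hM j (Nat.pos_of_ne_zero hj) hjN, mul_zero]
    · rw [pow_eq_zero_of_le hjN hx, zero_mul, zero_mul]
  · simp

theorem Nat.Prime.pow_dvd_choose_pow_add {p : ℕ} (hp : p.Prime) (m : ℕ) {k j : ℕ}
    (hj0 : j ≠ 0) (hjk : j ≤ k) : p ^ m ∣ (p ^ (m + k)).choose j := by
  have hjle : j ≤ p ^ (m + k) :=
    hjk.trans ((Nat.lt_pow_self hp.one_lt).le.trans (Nat.pow_le_pow_right hp.pos (by omega)))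
  rw [hp.pow_dvd_iff_le_factorization (Nat.choose_pos hjle).ne',
    Nat.factorization_choose_prime_pow hp hjle hj0]
  have := Nat.factorization_lt p hj0
  omega

theorem ZMod.exists_eq_mul_of_castHom_eq_zero {a b : ℕ} [NeZero b] (h : a ∣ b) {x : ZMod b}
    (hx : ZMod.castHom h (ZMod a) x = 0) : ∃ c, x = a * c := by
  rw [← ZMod.natCast_zmod_val x, map_natCast, ZMod.natCast_eq_zero_iff] at hx
  obtain ⟨c, hc⟩ := hx
  exact ⟨c, by rw [← ZMod.natCast_zmod_val x, hc, Nat.cast_mul]⟩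

section PGroup

variable {G : Type*} [Group G]

theorem Subgroup.commutatorElement_mem_of_index_prime {M : Subgroup G} [M.Normal]
    (hM : M.index.Prime) (a b : G) : ⁅a, b⁆ ∈ M := by
  have : Fact (Nat.card (G ⧸ M)).Prime := ⟨hM⟩
  have : IsCyclic (G ⧸ M) := isCyclic_of_prime_card rfl
  rw [← QuotientGroup.eq_one_iff, ← QuotientGroup.mk'_apply, map_commutatorElement,
    commutatorElement_eq_one_iff_commute]
  exact IsMulCommutative.is_comm.comm _ _

theorem frattini_le_ker_of_surjective {H : Type*} [Group H] (hH : (Nat.card H).Prime)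
    {f : G →* H} (hf : Function.Surjective f) : frattini G ≤ f.ker := by
  have : Fact (Nat.card H).Prime := ⟨hH⟩
  have : Finite H := Nat.finite_of_card_ne_zero hH.ne_zero
  have : IsSimpleOrder (Subgroup H) :=
    { toNontrivial := Subgroup.nontrivial_iff.mpr (Finite.one_lt_card_iff_nontrivial.mp hH.one_lt)
      eq_bot_or_eq_top := fun K => K.eq_bot_or_eq_top_of_prime_card }
  rw [← MonoidHom.comap_bot]
  exact frattini_le_coatom (Subgroup.isCoatom_comap_of_surjective hf isCoatom_bot)

variable {p : ℕ} [Fact p.Prime]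

theorem IsPGroup.normal_of_isCoatom [Finite G] (hG : IsPGroup p G) {M : Subgroup G}
    (hM : IsCoatom M) : M.Normal :=
  have : Group.IsNilpotent G := hG.isNilpotent
  Subgroup.NormalizerCondition.normal_of_coatom M Group.normalizerCondition_of_isNilpotent hM

theorem IsPGroup.index_eq_of_isCoatom [Finite G] (hG : IsPGroup p G) {M : Subgroup G} [M.Normal]
    (hM : IsCoatom M) : M.index = p := by
  have : Nontrivial (G ⧸ M) := QuotientGroup.nontrivial_iff.mpr hM.ne_top
  have hdvd : p ∣ Nat.card (G ⧸ M) :=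
    ((hG.to_quotient M).card_eq_or_dvd).resolve_left Finite.one_lt_card.ne'
  obtain ⟨g, hg⟩ := exists_prime_orderOf_dvd_card' p hdvd
  have hgen : Subgroup.zpowers g = ⊤ := by
    obtain ⟨x, rfl⟩ := QuotientGroup.mk_surjective g
    have hx : x ∉ M := fun hx => by
      rw [(QuotientGroup.eq_one_iff x).mpr hx, orderOf_one] at hg
      exact (Fact.out : p.Prime).one_lt.ne hg
    have hle : M ≤ (Subgroup.zpowers (x : G ⧸ M)).comap (QuotientGroup.mk' M) := fun y hy => by
      simp [(QuotientGroup.eq_one_iff y).mpr hy]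
    have htop := hM.2 _ (lt_of_le_of_ne hle fun h => hx (h ▸ Subgroup.mem_zpowers _))
    rw [← Subgroup.map_comap_eq_self_of_surjective (QuotientGroup.mk'_surjective M)
      (Subgroup.zpowers _), htop, Subgroup.map_top_of_surjective _ (QuotientGroup.mk'_surjective M)]
  rw [Subgroup.index, ← Subgroup.card_top, ← hgen, Nat.card_zpowers, hg]

theorem IsPGroup.le_frattini [Finite G] (hG : IsPGroup p G) {K : Subgroup G}
    (hK : ∀ H : Subgroup G,
      (∀ a b : G, ⁅a, b⁆ ∈ H) → (∀ g : G, g ^ p ∈ H) → K ≤ H) :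
    K ≤ frattini G := by
  refine le_iInf₂ fun M hM => ?_
  have := hG.normal_of_isCoatom hM
  have hindex := hG.index_eq_of_isCoatom hM
  exact hK M (M.commutatorElement_mem_of_index_prime (hindex ▸ Fact.out))
    fun g => hindex ▸ M.pow_index_mem g

end PGroup

section Unipotent

variable {R : Type*} [CommRing R] {N : ℕ}

theorem IsUU.pow_eq_one {A : Matrix (Fin N) (Fin N) R} (hA : IsUU A) {M : ℕ}
    (hM : ∀ j, 0 < j → j < N → (M.choose j : R) = 0) : A ^ M = 1 := by
  have hnil : (A - 1) ^ N = 0 := by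
    have := aeval_self_charpoly A
    simpa [charpoly_of_isUpperTriangular A hA.1, hA.2] using this
  rw [← sub_add_cancel A 1]
  refine add_one_pow_eq_one_of_pow_eq_zero hnil fun j hj hjN => ?_
  rw [← map_natCast (scalar (Fin N)), hM j hj hjN, map_zero]

theorem isUU_transvection {i j : Fin N} (hij : i < j) (c : R) : IsUU (transvection i j c) := by
  refine ⟨fun a b hba => ?_, fun a => ?_⟩
  · have hba : b < a := hba
    rw [transvection, Matrix.add_apply, one_apply_ne hba.ne', single_apply, if_neg, zero_add]
    rintro ⟨rfl, rfl⟩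
    exact lt_asymm hij hba
  · rw [transvection, Matrix.add_apply, one_apply_eq, single_apply, if_neg, add_zero]
    rintro ⟨rfl, rfl⟩
    exact lt_irrefl _ hij

namespace UT

def toMatrix : UT R N →* Matrix (Fin N) (Fin N) R :=
  (Units.coeHom _).comp (UT R N).subtype

theorem toMatrix_apply (u : UT R N) (a b : Fin N) : toMatrix u a b = UTentry u a b :=
  rfl

theorem toMatrix_injective : Function.Injective (toMatrix : UT R N → _) :=
  fun _ _ h => Subtype.ext (Units.ext h)

theorem isUU_toMatrix (u : UT R N) : IsUU (toMatrix u) :=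
  u.2

theorem toMatrix_apply_eq_one_apply (u : UT R N) {a b : Fin N}
    (h : a < b → toMatrix u a b = 0) :
    toMatrix u a b = (1 : Matrix (Fin N) (Fin N) R) a b := by
  rcases lt_trichotomy a b with hab | rfl | hab
  · rw [h hab, one_apply_ne hab.ne]
  · rw [one_apply_eq]
    exact (isUU_toMatrix u).2 a
  · rw [one_apply_ne hab.ne']
    exact (isUU_toMatrix u).1 hab

theorem isPGroup {p m : ℕ} [hp : Fact p.Prime] (hR : ((p ^ m : ℕ) : R) = 0) :
    IsPGroup p (UT R N) := fun u => by
  refine ⟨m + N, toMatrix_injective ?_⟩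
  rw [map_pow, map_one]
  refine (isUU_toMatrix u).pow_eq_one fun j hj hjN => ?_
  obtain ⟨t, ht⟩ := hp.out.pow_dvd_choose_pow_add m hj.ne' hjN.le
  rw [ht, Nat.cast_mul, hR, zero_mul]

variable {i j k : Fin N}

noncomputable def transvection (hij : i < j) (c : R) : UT R N :=
  ⟨nonsingInvUnit (Matrix.transvection i j c)
      (det_transvection_of_ne i j hij.ne c ▸ isUnit_one),
    isUU_transvection hij c⟩

theorem toMatrix_transvection (hij : i < j) (c : R) :
    toMatrix (transvection hij c) = Matrix.transvection i j c :=
  rfl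

theorem transvection_mul_transvection_same (hij : i < j) (c d : R) :
    transvection hij c * transvection hij d = transvection hij (c + d) :=
  toMatrix_injective (Matrix.transvection_mul_transvection_same i j hij.ne c d)

theorem transvection_zero (hij : i < j) : transvection hij (0 : R) = 1 :=
  toMatrix_injective (Matrix.transvection_zero i j)

theorem transvection_inv (hij : i < j) (c : R) :
    (transvection hij c)⁻¹ = transvection hij (-c) :=
  inv_eq_of_mul_eq_one_right (by rw [transvection_mul_transvection_same, add_neg_cancel,
    transvection_zero])

theorem transvection_pow (hij : i < j) (c : R) (t : ℕ) :
    transvection hij c ^ t = transvection hij (t * c) := by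
  induction t with
  | zero => rw [pow_zero, Nat.cast_zero, zero_mul, transvection_zero]
  | succ t ih => rw [pow_succ, ih, transvection_mul_transvection_same, Nat.cast_succ, add_one_mul]

theorem commutatorElement_transvection (hij : i < j) (hjk : j < k) (c d : R) :
    ⁅transvection hij c, transvection hjk d⁆ = transvection (hij.trans hjk) (c * d) := by
  rw [commutatorElement_def, transvection_inv, transvection_inv]
  refine toMatrix_injective ?_
  simp only [map_mul, toMatrix_transvection, Matrix.transvection, add_mul, mul_add, one_mul,
    mul_one, single_mul_single_same, single_mul_single_of_ne _ _ _ _ hij.ne',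
    single_mul_single_of_ne _ _ _ _ hjk.ne', single_mul_single_of_ne _ _ _ _ (hij.trans hjk).ne',
    add_zero, mul_neg, neg_mul, ← single_neg]
  abel

theorem toMatrix_transvection_mul (hij : i < j) (c : R) {u : UT R N}
    (hrow : ∀ b, toMatrix u j b = (1 : Matrix (Fin N) (Fin N) R) j b) :
    toMatrix (transvection hij c * u) = toMatrix u + single i j c := by
  ext a b
  rw [map_mul, toMatrix_transvection, Matrix.add_apply, single_apply]
  by_cases ha : a = i
  · subst ha
    rw [transvection_mul_apply_same, hrow, one_apply]
    by_cases hb : j = b <;> simp [hb]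
  · rw [transvection_mul_apply_of_ne _ _ _ _ ha, if_neg fun h => ha h.1.symm, add_zero]

open Classical in
noncomputable def supportAboveDiag (u : UT R N) : Finset (Fin N × Fin N) :=
  {x | x.1 < x.2 ∧ toMatrix u x.1 x.2 ≠ 0}

theorem eq_one_of_supportAboveDiag_eq_empty {u : UT R N} (h : supportAboveDiag u = ∅) :
    u = 1 :=
  toMatrix_injective <| Matrix.ext fun a b => by
    rw [map_one]
    refine toMatrix_apply_eq_one_apply u fun hab => ?_
    by_contra hne
    exact Finset.eq_empty_iff_forall_notMem.mp h (a, b) (by simp [supportAboveDiag, hab, hne])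

theorem mem_of_forall_transvection_mem {H : Subgroup (UT R N)} (u : UT R N)
    (hu : ∀ i j (hij : i < j), transvection hij (toMatrix u i j) ∈ H) : u ∈ H := by
  induction hk : (supportAboveDiag u).card using Nat.strong_induction_on generalizing u with
  | _ k ih =>
  subst hk
  rcases (supportAboveDiag u).eq_empty_or_nonempty with hS | hS
  · exact eq_one_of_supportAboveDiag_eq_empty hS ▸ H.one_mem
  obtain ⟨⟨i, j⟩, hij, hmax⟩ := Finset.exists_max_image _ Prod.fst hS
  simp only [supportAboveDiag, Finset.mem_filter, Finset.mem_univ, true_and] at hij hmax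
  -- `i` is the lowest row with a nonzero entry above the diagonal, so row `j` is that of the
  -- identity and left multiplication by a transvection at `(i, j)` changes only that entry.
  have hrow : ∀ b, toMatrix u j b = (1 : Matrix (Fin N) (Fin N) R) j b := fun b =>
    toMatrix_apply_eq_one_apply u fun hjb => by
      by_contra h
      exact (hmax (j, b) ⟨hjb, h⟩).not_gt hij.1
  set c := toMatrix u i j
  set v := transvection hij.1 (-c) * u
  have hv : ∀ a b, toMatrix v a b = if (a, b) = (i, j) then 0 else toMatrix u a b := by
    intro a b
    rw [toMatrix_transvection_mul hij.1 (-c) hrow, Matrix.add_apply, single_apply]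
    by_cases h : (a, b) = (i, j)
    · obtain ⟨rfl, rfl⟩ := Prod.ext_iff.mp h
      simp [c]
    · rw [if_neg h, if_neg fun h' => h (by rw [h'.1, h'.2]), add_zero]
  have hsupp : supportAboveDiag v = (supportAboveDiag u).erase (i, j) := by
    ext ⟨a, b⟩
    by_cases h : (a, b) = (i, j) <;> simp [supportAboveDiag, hv, h]
  have hvH : v ∈ H := by
    refine ih _ ?_ v (fun a b hab => ?_) rfl
    · rw [hsupp]
      exact Finset.card_erase_lt_of_mem (by simpa [supportAboveDiag] using hij)
    · rw [hv]
      split_ifs with h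
      · rw [transvection_zero]
        exact H.one_mem
      · exact hu a b hab
  have huv : u = transvection hij.1 c * v := by
    rw [← mul_assoc, transvection_mul_transvection_same, add_neg_cancel, transvection_zero,
      one_mul]
  rw [huv]
  exact H.mul_mem (hu i j hij.1) hvH

variable {S : Type*} [AddCommGroup S] {n : ℕ}

theorem toMatrix_mul_apply_castSucc_succ (u v : UT R (n + 1)) (i : Fin n) :
    toMatrix (u * v) i.castSucc i.succ =
      toMatrix u i.castSucc i.succ + toMatrix v i.castSucc i.succ := by
  rw [map_mul, mul_apply, Finset.sum_eq_add i.castSucc i.succ (Fin.castSucc_lt_succ (i := i)).ne]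
  · rw [(isUU_toMatrix u).2, (isUU_toMatrix v).2, one_mul, mul_one, add_comm]
  · rintro k - ⟨hk₁, hk₂⟩
    rcases lt_or_gt_of_ne hk₁ with hk | hk
    · rw [show toMatrix u i.castSucc k = 0 from (isUU_toMatrix u).1 hk, zero_mul]
    · have hk : i.succ < k := lt_of_le_of_ne (Fin.castSucc_lt_iff_succ_le.mp hk) hk₂.symm
      rw [show toMatrix v k i.succ = 0 from (isUU_toMatrix v).1 hk, mul_zero]
  all_goals simp

def superdiagHom (f : R →+ S) (n : ℕ) : UT R (n + 1) →* Multiplicative (Fin n → S) where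
  toFun u := Multiplicative.ofAdd fun i => f (toMatrix u i.castSucc i.succ)
  map_one' := by
    rw [← ofAdd_zero]
    congr
    funext i
    rw [map_one, one_apply_ne (Fin.castSucc_lt_succ (i := i)).ne, map_zero, Pi.zero_apply]
  map_mul' u v := by
    rw [← ofAdd_add]
    congr
    funext i
    rw [toMatrix_mul_apply_castSucc_succ, map_add, Pi.add_apply]

variable (f : R →+ S)

theorem mem_ker_superdiagHom {u : UT R (n + 1)} :
    u ∈ (superdiagHom f n).ker ↔ ∀ i : Fin n, f (toMatrix u i.castSucc i.succ) = 0 := by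
  change Multiplicative.ofAdd _ = 1 ↔ _
  rw [ofAdd_eq_one, funext_iff]
  rfl

theorem superdiagHom_transvection (i : Fin n) (c : R) :
    superdiagHom f n (transvection (Fin.castSucc_lt_succ (i := i)) c) =
      Multiplicative.ofAdd (Pi.single i (f c)) := by
  change Multiplicative.ofAdd _ = _
  congr
  funext l
  rw [toMatrix_transvection, Matrix.transvection, Matrix.add_apply,
    one_apply_ne (Fin.castSucc_lt_succ (i := l)).ne, zero_add, single_apply]
  by_cases hl : l = i
  · subst hl
    simp
  · rw [if_neg fun h => hl (Fin.castSucc_injective n h.1).symm, map_zero, Pi.single_eq_of_ne hl]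

theorem superdiagHom_surjective (hf : Function.Surjective f) :
    Function.Surjective (superdiagHom f n) := by
  intro a
  rw [← MonoidHom.mem_range, ← ofAdd_toAdd a,
    ← Finset.univ_sum_single (Multiplicative.toAdd a), ofAdd_sum]
  refine Subgroup.prod_mem _ fun i _ => ?_
  obtain ⟨c, hc⟩ := hf (Multiplicative.toAdd a i)
  exact ⟨transvection (Fin.castSucc_lt_succ (i := i)) c, by rw [superdiagHom_transvection, hc]⟩

theorem frattini_le_ker_superdiagHom (hS : (Nat.card S).Prime) (hf : Function.Surjective f) :
    frattini (UT R (n + 1)) ≤ (superdiagHom f n).ker := fun u hu => by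
  refine (mem_ker_superdiagHom f).mpr fun i => ?_
  let π : Multiplicative (Fin n → S) →* Multiplicative S :=
    AddMonoidHom.toMultiplicative (Pi.evalAddMonoidHom (fun _ => S) i)
  have hπ : Function.Surjective (π.comp (superdiagHom f n)) :=
    (Function.surjective_eval i).comp (superdiagHom_surjective f hf)
  exact frattini_le_ker_of_surjective (H := Multiplicative S) hS hπ hu

theorem ker_superdiagHom_le {k : ℕ} (hf : ∀ x, f x = 0 → ∃ c, x = k * c)
    {H : Subgroup (UT R (n + 1))} (hcomm : ∀ a b : UT R (n + 1), ⁅a, b⁆ ∈ H)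
    (hpow : ∀ g, g ^ k ∈ H) : (superdiagHom f n).ker ≤ H := by
  intro u hu
  rw [mem_ker_superdiagHom] at hu
  refine mem_of_forall_transvection_mem u fun a b hab => ?_
  rcases lt_or_ge ((a : ℕ) + 1) b with hfar | hadj
  · let w : Fin (n + 1) := ⟨a + 1, by omega⟩
    have haw : a < w := Fin.lt_def.mpr (Nat.lt_succ_self a)
    have hwb : w < b := Fin.lt_def.mpr hfar
    rw [← mul_one (toMatrix u a b), ← commutatorElement_transvection haw hwb]
    exact hcomm _ _
  · obtain ⟨i, rfl, rfl⟩ : ∃ i : Fin n, a = i.castSucc ∧ b = i.succ :=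
      ⟨⟨a, by omega⟩, rfl, Fin.ext (by simp only [Fin.succ_mk]; omega)⟩
    obtain ⟨c, hc⟩ := hf _ (hu i)
    rw [hc, ← transvection_pow]
    exact hpow _

end UT

end Unipotent

theorem frattini_unipotent_eq_ker_general (p m n : ℕ) [Fact p.Prime] (hm : 1 ≤ m) :
    (∀ u : UT (ZMod (p ^ m)) (n + 1),
      u ∈ frattini (UT (ZMod (p ^ m)) (n + 1)) ↔
      ∀ i : Fin n, ZMod.castHom (dvd_pow_self p (Nat.one_le_iff_ne_zero.mp hm)) (ZMod p)
        (UTentry u i.castSucc i.succ) = 0) ∧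
    ∃ e : (UT (ZMod (p ^ m)) (n + 1) ⧸ frattini (UT (ZMod (p ^ m)) (n + 1))) ≃*
        Multiplicative (Fin n → ZMod p),
      ∀ u : UT (ZMod (p ^ m)) (n + 1),
        e (QuotientGroup.mk u) = Multiplicative.ofAdd (fun i =>
          ZMod.castHom (dvd_pow_self p (Nat.one_le_iff_ne_zero.mp hm)) (ZMod p)
            (UTentry u i.castSucc i.succ)) := by
  have hd : p ∣ p ^ m := dvd_pow_self p (Nat.one_le_iff_ne_zero.mp hm)
  set f := ZMod.castHom hd (ZMod p)
  have hf : Function.Surjective f := ZMod.ringHom_surjective f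
  have hker : frattini (UT (ZMod (p ^ m)) (n + 1)) = (UT.superdiagHom f.toAddMonoidHom n).ker :=
    le_antisymm (UT.frattini_le_ker_superdiagHom _ (by rw [Nat.card_zmod]; exact Fact.out) hf)
      ((UT.isPGroup (ZMod.natCast_self _)).le_frattini fun H hcomm hpow =>
        UT.ker_superdiagHom_le _ (fun _ => ZMod.exists_eq_mul_of_castHom_eq_zero hd) hcomm hpow)
  refine ⟨fun u => by simp_rw [hker, UT.mem_ker_superdiagHom, UT.toMatrix_apply]; exact Iff.rfl,
    (QuotientGroup.quotientMulEquivOfEq hker).trans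
      (QuotientGroup.quotientKerEquivOfSurjective _ (UT.superdiagHom_surjective _ hf)),
    fun u => rfl⟩

/-- the Frattini subgroup of `U_{n+1}(ℤ/p^m)` is the kernel of `φ_m`
(superdiagonal entries mod `p`), and `φ_m` induces an isomorphism
`U_{n+1}(ℤ/p^m)/Frat ≅ (𝔽_p)^n`. -/
theorem frattini_unipotent_eq_ker (p m n : ℕ) [Fact p.Prime] (hm : 1 ≤ m) (hn : 1 ≤ n) :
    (∀ u : UT (ZMod (p ^ m)) (n + 1),
      u ∈ frattini (UT (ZMod (p ^ m)) (n + 1)) ↔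
      ∀ i : Fin n, ZMod.castHom (dvd_pow_self p (Nat.one_le_iff_ne_zero.mp hm)) (ZMod p)
        (UTentry u i.castSucc i.succ) = 0) ∧
    ∃ e : (UT (ZMod (p ^ m)) (n + 1) ⧸ frattini (UT (ZMod (p ^ m)) (n + 1))) ≃*
        Multiplicative (Fin n → ZMod p),
      ∀ u : UT (ZMod (p ^ m)) (n + 1),
        e (QuotientGroup.mk u) = Multiplicative.ofAdd (fun i =>
          ZMod.castHom (dvd_pow_self p (Nat.one_le_iff_ne_zero.mp hm)) (ZMod p)
            (UTentry u i.castSucc i.succ)) :=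
  frattini_unipotent_eq_ker_general p m n hm
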